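/- arXiv:1207.5551 — 2 statements merged into one kernel-verified Lean document; each statement's English description precedes it below -/
import Mathlib

section
/- For every cube Q in ℝⁿ (half-open, sides parallel to the axes) there exists t ∈ {0, 1/3}ⁿ and a cube Q_t in the shifted dyadic grid 𝒟^t = {2^{-k}([0,1)^n + m + (-1)^k t) : k ∈ ℤ, m ∈ ℤⁿ} such that Q ⊆ Q_t and ℓ(Q_t) ≤ 6 ℓ(Q). -/
/-!
Choose the dyadic scale `L = 2^{-k}` with `3ℓ(Q) ≤ L ≤ 6ℓ(Q)` and work one coordinate at a time.
A side `[a, a + ℓ(Q))` of length at most `L/3` either lies in a cell `[Lm, L(m+1))` of the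
unshifted grid, or it straddles a grid point `L(m+1)` and then stays within distance `L/3` of it.
In the grid shifted by `1/3` the cells of side `L` have their boundaries in `L(ℤ + (-1)^k/3)`,
at distance `L/3` from `Lℤ`, so the shifted cell around `L(m+1)` contains the side.
-/

open MeasureTheory Set
open scoped ENNReal NNReal

noncomputable section

/-- A half-open cube in `ℝⁿ` with sides parallel to the axes. -/
structure Cube (n : ℕ) where
  corner : EuclideanSpace ℝ (Fin n)
  side : ℝ
  side_pos : 0 < side

/-- The underlying set of a cube: `∏ [cᵢ, cᵢ + ℓ)`. -/
def Cube.set {n : ℕ} (Q : Cube n) : Set (EuclideanSpace ℝ (Fin n)) :=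
  {x | ∀ i, Q.corner i ≤ x i ∧ x i < Q.corner i + Q.side}

/-- A dyadic grid: a countable family of cubes with dyadic side lengths, nested or disjoint,
whose cubes of each fixed side length `2^k` partition `ℝⁿ`. -/
def IsDyadicGrid {n : ℕ} (D : Set (Cube n)) : Prop :=
  D.Countable ∧
  (∀ Q ∈ D, ∃ k : ℤ, Q.side = 2 ^ k) ∧
  (∀ Q ∈ D, ∀ P ∈ D, Q.set ∩ P.set = ∅ ∨ Q.set ∩ P.set = P.set ∨ Q.set ∩ P.set = Q.set) ∧
  (∀ (k : ℤ) (x : EuclideanSpace ℝ (Fin n)), ∃! Q : Cube n, Q ∈ D ∧ Q.side = 2 ^ k ∧ x ∈ Q.set)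

/-- The shifted dyadic grid `𝒟^t = {2^{-k}([0,1)ⁿ + m + (-1)^k t)}`. -/
def shiftedGrid (n : ℕ) (t : Fin n → ℝ) : Set (Cube n) :=
  {Q | ∃ (k : ℤ) (m : Fin n → ℤ), Q.side = (2 : ℝ) ^ (-k) ∧
    ∀ i, Q.corner i = (2 : ℝ) ^ (-k) * (((m i : ℝ)) + ((-1 : ℝ)) ^ k * t i)}

/-- The shift `t ∈ {0, 1/3}ⁿ` encoded by a boolean vector. -/
def shiftOf {n : ℕ} (t : Fin n → Bool) : Fin n → ℝ := fun i => if t i then 1 / 3 else 0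

theorem Cube.set_subset_set {n : ℕ} {Q P : Cube n}
    (h : ∀ i, P.corner i ≤ Q.corner i ∧ Q.corner i + Q.side ≤ P.corner i + P.side) :
    Q.set ⊆ P.set := fun _ hx i =>
  ⟨(h i).1.trans (hx i).1, (hx i).2.trans_le (h i).2⟩

theorem exists_zpow_two_neg_mem_Icc {s : ℝ} (hs : 0 < s) :
    ∃ k : ℤ, 3 * s ≤ (2 : ℝ) ^ (-k) ∧ (2 : ℝ) ^ (-k) ≤ 6 * s := by
  obtain ⟨j, hj_lt, hj_le⟩ := exists_mem_Ioc_zpow (by positivity : 0 < 6 * s) one_lt_two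
  refine ⟨-j, ?_, by rw [neg_neg]; exact hj_lt.le⟩
  rw [zpow_add_one₀ two_ne_zero] at hj_le
  rw [neg_neg]
  linarith

theorem neg_one_zpow_eq_or (R : Type*) [DivisionRing R] (k : ℤ) :
    (-1 : R) ^ k = 1 ∨ (-1 : R) ^ k = -1 :=
  k.even_or_odd.imp Even.neg_one_zpow Odd.neg_one_zpow

theorem exists_shifted_cell_superset {L s ε : ℝ} (a : ℝ) (hL : 0 < L) (hs : 3 * s ≤ L)
    (hε : ε = 1 ∨ ε = -1) :
    ∃ (b : Bool) (m : ℤ), L * (m + ε * (if b then 1 / 3 else 0)) ≤ a ∧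
      a + s ≤ L * (m + ε * (if b then 1 / 3 else 0)) + L := by
  set m₀ := ⌊a / L⌋
  have hm₀_le : L * m₀ ≤ a := by
    rw [mul_comm, ← le_div_iff₀ hL]; exact Int.floor_le _
  have hlt_m₀ : a < L * (m₀ + 1) := by
    rw [mul_comm, ← div_lt_iff₀ hL]; exact Int.lt_floor_add_one _
  by_cases hfits : a + s ≤ L * (m₀ + 1)
  · exact ⟨false, m₀, by simpa using hm₀_le, by simpa [mul_add] using hfits⟩
  · rw [not_le] at hfits
    rcases hε with rfl | rfl
    · refine ⟨true, m₀, ?_, ?_⟩ <;> simp only [if_true] <;> linarith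
    · refine ⟨true, m₀ + 1, ?_, ?_⟩ <;> simp only [if_true] <;> push_cast <;> linarith

/-- Every cube is contained in a cube of one of the shifted dyadic grids `𝒟^t`,
`t ∈ {0,1/3}ⁿ`, of at most `6` times its side length. -/
theorem statement0 (n : ℕ) (Q : Cube n) :
    ∃ (t : Fin n → Bool) (Qt : Cube n), Qt ∈ shiftedGrid n (shiftOf t) ∧
      Q.set ⊆ Qt.set ∧ Qt.side ≤ 6 * Q.side := by
  obtain ⟨k, h3L, hL6⟩ := exists_zpow_two_neg_mem_Icc Q.side_pos
  have hL : (0 : ℝ) < 2 ^ (-k) := by positivity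
  choose t m hcell using fun i =>
    exists_shifted_cell_superset (Q.corner i) hL h3L (neg_one_zpow_eq_or ℝ k)
  let Qt : Cube n :=
    ⟨WithLp.toLp 2 fun i => 2 ^ (-k) * (m i + (-1) ^ k * shiftOf t i), 2 ^ (-k), hL⟩
  exact ⟨t, Qt, ⟨k, m, rfl, fun i => rfl⟩, Cube.set_subset_set hcell, hL6⟩
end
end

section
/- Let 𝒟 be a dyadic grid and f a bounded nonnegative measurable function with compact support. Then there exists a sparse family 𝒮 ⊆ 𝒟 such that for all 0 < α < n and all x, I_α^𝒟 f(x) ≤ C(n,α) I_α^𝒮 f(x), where I_α^𝒮 f(x) = Σ_{Q ∈ 𝒮} |Q|^{α/n}(⨍_Q f) χ_Q(x). -/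
open MeasureTheory Set
open scoped ENNReal NNReal

noncomputable section

/-- The union of the members of `S` properly contained in `Q`. -/
def properSubUnion {n : ℕ} (S : Set (Cube n)) (Q : Cube n) : Set (EuclideanSpace ℝ (Fin n)) :=
  ⋃ Q' ∈ {Q' ∈ S | Q'.set ⊂ Q.set}, Cube.set Q'

/-- A sparse family of cubes: for each `Q ∈ S` the union of the members of `S` properly
contained in `Q` has measure at most `|Q|/2`. -/
def IsSparse {n : ℕ} (S : Set (Cube n)) : Prop :=
  ∀ Q ∈ S, volume (properSubUnion S Q) ≤ volume Q.set / 2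

/-- The dyadic Riesz potential `I_α^𝒟 f = Σ_{Q ∈ 𝒟} |Q|^{α/n} (⨍_Q f) χ_Q`. -/
def dyadicRiesz {n : ℕ} (D : Set (Cube n)) (α : ℝ) (f : EuclideanSpace ℝ (Fin n) → ℝ)
    (x : EuclideanSpace ℝ (Fin n)) : ℝ :=
  ∑' Q : D, Set.indicator (Q : Cube n).set
    (fun _ => (volume (Q : Cube n).set).toReal ^ (α / n) * ⨍ y in (Q : Cube n).set, f y) x

/-!
Take for `𝒮` the Calderón–Zygmund cubes of `f` at all heights `a ^ m`, `a = 2 ^ (n + 1)`: the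
maximal cubes of `𝒟` on which the average of `f` exceeds `a ^ m`.

Sparseness: a stopping cube `Q` of height `m` lies in a parent of average at most `a ^ m`, so
`∫_Q f ≤ 2 ^ n a ^ m |Q|`; the stopping cubes strictly inside `Q` have larger height, hence average
above `a ^ (m + 1)`, and since cubes of a grid are nested or disjoint their union has measure at
most `2 ^ n a ^ m |Q| / a ^ (m + 1) = |Q| / 2`.

Domination: a cube `Q ∋ x` of `𝒟` whose average lies in `(a ^ m, a ^ (m + 1)]` is contained in the
stopping cube `P ∋ x` of height `m`, and `⨍_Q f ≤ a ⨍_P f`. Summing `|Q| ^ (α / n)` over the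
cubes of `𝒟` with `x ∈ Q ⊆ P` is a geometric series bounded by `|P| ^ (α / n) / (1 - 2 ^ (-α))`,
which gives `C = 2 ^ (n + 1) / (1 - 2 ^ (-α))`.
-/

open Function

section Covering

variable {X : Type*} [MeasurableSpace X] {μ : Measure X} {𝒞 : Set (Set X)} {c : ℝ≥0∞}
  {g : X → ℝ≥0∞}

lemma mul_measure_sUnion_le_lintegral_of_finite (hfin : 𝒞.Finite)
    (hmeas : ∀ s ∈ 𝒞, MeasurableSet s)
    (hnest : ∀ s ∈ 𝒞, ∀ t ∈ 𝒞, s ⊆ t ∨ t ⊆ s ∨ Disjoint s t)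
    (hc : ∀ s ∈ 𝒞, c * μ s ≤ ∫⁻ x in s, g x ∂μ) :
    c * μ (⋃₀ 𝒞) ≤ ∫⁻ x in ⋃₀ 𝒞, g x ∂μ := by
  -- the maximal members of `𝒞` are pairwise disjoint and cover `⋃₀ 𝒞`
  set M := {s | Maximal (· ∈ 𝒞) s}
  have hM𝒞 : M ⊆ 𝒞 := fun s hs => hs.prop
  have hunion : ⋃₀ 𝒞 = ⋃ s : M, (s : Set X) := by
    refine (sUnion_subset fun s hs => ?_).antisymm
      (iUnion_subset fun s => subset_sUnion_of_mem (hM𝒞 s.2))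
    obtain ⟨t, hst, ht⟩ := hfin.exists_le_maximal hs
    exact hst.trans (subset_iUnion_of_subset ⟨t, ht⟩ subset_rfl)
  have hdisj : Pairwise (Disjoint on fun s : M => (s : Set X)) := by
    rintro ⟨s, hs⟩ ⟨t, ht⟩ hst
    rcases hnest s hs.prop t ht.prop with h | h | h
    · exact absurd (Subtype.ext (hs.eq_of_le ht.prop h)) hst
    · exact absurd (Subtype.ext (ht.eq_of_le hs.prop h).symm) hst
    · exact h
  have : Countable M := (hfin.subset hM𝒞).countable.to_subtype
  have hmeasM : ∀ s : M, MeasurableSet (s : Set X) := fun s => hmeas s (hM𝒞 s.2)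
  rw [hunion, measure_iUnion hdisj hmeasM, lintegral_iUnion hmeasM hdisj,
    ← ENNReal.tsum_mul_left]
  exact ENNReal.tsum_le_tsum fun s => hc s (hM𝒞 s.2)

lemma mul_measure_sUnion_le_lintegral (hcount : 𝒞.Countable)
    (hmeas : ∀ s ∈ 𝒞, MeasurableSet s)
    (hnest : ∀ s ∈ 𝒞, ∀ t ∈ 𝒞, s ⊆ t ∨ t ⊆ s ∨ Disjoint s t)
    (hc : ∀ s ∈ 𝒞, c * μ s ≤ ∫⁻ x in s, g x ∂μ) :
    c * μ (⋃₀ 𝒞) ≤ ∫⁻ x in ⋃₀ 𝒞, g x ∂μ := by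
  rcases 𝒞.eq_empty_or_nonempty with rfl | hne
  · simp
  obtain ⟨e, rfl⟩ := hcount.exists_eq_range hne
  rw [sUnion_range, measure_iUnion_eq_iSup_accumulate, ENNReal.mul_iSup]
  refine iSup_le fun N => ?_
  have hsub : e '' Iic N ⊆ range e := image_subset_range _ _
  have hacc : accumulate e N = ⋃₀ (e '' Iic N) := by
    rw [accumulate_def, sUnion_image]; rfl
  rw [hacc]
  calc c * μ (⋃₀ (e '' Iic N)) ≤ ∫⁻ x in ⋃₀ (e '' Iic N), g x ∂μ :=
        mul_measure_sUnion_le_lintegral_of_finite ((finite_Iic N).image e)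
          (fun s hs => hmeas s (hsub hs)) (fun s hs t ht => hnest s (hsub hs) t (hsub ht))
          (fun s hs => hc s (hsub hs))
    _ ≤ ∫⁻ x in ⋃ i, e i, g x ∂μ := lintegral_mono_set <| sUnion_subset <| by
          rintro _ ⟨i, -, rfl⟩; exact subset_iUnion e i

end Covering

section Average

variable {X : Type*} [MeasurableSpace X] {μ : Measure X} {f : X → ℝ}

lemma integrable_of_bounded_of_hasCompactSupport [TopologicalSpace X]
    [IsFiniteMeasureOnCompacts μ] (hf : Measurable f) (hnn : ∀ x, 0 ≤ f x) {M : ℝ}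
    (hM : ∀ x, f x ≤ M) (hsupp : HasCompactSupport f) : Integrable f μ :=
  (integrableOn_iff_integrable_of_support_subset (subset_tsupport f)).1 <|
    Measure.integrableOn_of_bounded hsupp.isCompact.measure_lt_top.ne
      hf.aestronglyMeasurable (M := M) <| ae_of_all _ fun x => by
        rw [Real.norm_of_nonneg (hnn x)]; exact hM x

lemma setAverage_nonneg_of_nonneg (hnn : ∀ x, 0 ≤ f x) (s : Set X) :
    0 ≤ ⨍ x in s, f x ∂μ := by
  rw [setAverage_eq]
  exact smul_nonneg (by positivity) (integral_nonneg hnn)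

lemma setAverage_le_integral_div (hint : Integrable f μ) (hnn : ∀ x, 0 ≤ f x) (s : Set X) :
    ⨍ x in s, f x ∂μ ≤ (∫ x, f x ∂μ) / (μ s).toReal := by
  rw [setAverage_eq, smul_eq_mul, measureReal_def, inv_mul_eq_div]
  exact div_le_div_of_nonneg_right (setIntegral_le_integral hint (ae_of_all _ hnn))
    ENNReal.toReal_nonneg

lemma ofReal_mul_measure_le_setLIntegral (hint : Integrable f μ) (hnn : ∀ x, 0 ≤ f x)
    {s : Set X} (hs : μ s ≠ ⊤) {t : ℝ} (ht : 0 ≤ t) (havg : t ≤ ⨍ x in s, f x ∂μ) :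
    ENNReal.ofReal t * μ s ≤ ∫⁻ x in s, ENNReal.ofReal (f x) ∂μ := by
  rw [← ofReal_integral_eq_lintegral_ofReal hint.integrableOn (ae_of_all _ hnn),
    ← measure_smul_setAverage f hs, ← ENNReal.ofReal_toReal hs, ← ENNReal.ofReal_mul ht,
    smul_eq_mul, measureReal_def, mul_comm]
  gcongr

end Average

lemma ENNReal.tsum_le_tsum_of_exists_preimage {ι κ : Type*} {f : ι → ℝ≥0∞} {g : κ → ℝ≥0∞}
    (π : κ → ι) (h : ∀ i, f i ≠ 0 → ∃ k, π k = i ∧ f i ≤ g k) :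
    ∑' i, f i ≤ ∑' k, g k := by
  rw [← ENNReal.tsum_fiberwise g π]
  refine ENNReal.tsum_le_tsum fun i => ?_
  by_cases hi : f i = 0
  · simp [hi]
  obtain ⟨k, rfl, hk⟩ := h i hi
  exact hk.trans (ENNReal.le_tsum (⟨k, rfl⟩ : π ⁻¹' {π k}))

lemma ENNReal.tsum_ite_le_ofReal_zpow {r : ℝ} (hr : 1 < r) (L : ℤ) :
    ∑' j : ℤ, (if j ≤ L then ENNReal.ofReal (r ^ j) else 0) =
      ENNReal.ofReal (r ^ L / (1 - r⁻¹)) := by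
  have hr0 : 0 < r := one_pos.trans hr
  have hinv : r⁻¹ < 1 := inv_lt_one_of_one_lt₀ hr
  have hinj : Injective fun k : ℕ => L - k := fun k₁ k₂ h => by simpa using h
  have hsupp : support (fun j : ℤ => if j ≤ L then ENNReal.ofReal (r ^ j) else 0) ⊆
      range fun k : ℕ => L - k := by
    intro j hj
    have hjL : j ≤ L := by_contra fun h => hj (if_neg h)
    exact ⟨(L - j).toNat, by simp [Int.toNat_of_nonneg (sub_nonneg.2 hjL)]⟩
  rw [← hinj.tsum_eq hsupp]
  calc ∑' k : ℕ, (if L - (k : ℤ) ≤ L then ENNReal.ofReal (r ^ (L - (k : ℤ))) else 0)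
      = ∑' k : ℕ, ENNReal.ofReal (r ^ L) * ENNReal.ofReal r⁻¹ ^ k := by
        refine tsum_congr fun k => ?_
        rw [if_pos (by omega), zpow_sub₀ hr0.ne', zpow_natCast, div_eq_mul_inv, ← inv_pow,
          ENNReal.ofReal_mul (by positivity), ENNReal.ofReal_pow (by positivity)]
    _ = ENNReal.ofReal (r ^ L / (1 - r⁻¹)) := by
        rw [ENNReal.tsum_mul_left, ENNReal.tsum_geometric, ← ENNReal.ofReal_one,
          ← ENNReal.ofReal_sub _ (by positivity), ← ENNReal.ofReal_inv_of_pos (by linarith),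
          ← ENNReal.ofReal_mul (by positivity), div_eq_mul_inv]

lemma tsum_le_mul_tsum_of_ofReal_le {ι : Type*} {D S : Set ι} (hSD : S ⊆ D) {t : ι → ℝ}
    (ht : ∀ i, 0 ≤ t i) {C : ℝ} (hC : 0 ≤ C)
    (h : ∑' i : D, ENNReal.ofReal (t i) ≤ ENNReal.ofReal C * ∑' i : S, ENNReal.ofReal (t i)) :
    ∑' i : D, t i ≤ C * ∑' i : S, t i := by
  have hS : 0 ≤ ∑' i : S, t i := tsum_nonneg fun i => ht i
  by_cases hsum : Summable fun i : D => t i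
  · have hsumS : Summable fun i : S => t i :=
      hsum.comp_injective (inclusion_injective hSD)
    rw [← ENNReal.ofReal_le_ofReal_iff (mul_nonneg hC hS), ENNReal.ofReal_mul hC,
      ENNReal.ofReal_tsum_of_nonneg (f := fun i : D => t i) (fun i => ht i) hsum,
      ENNReal.ofReal_tsum_of_nonneg (f := fun i : S => t i) (fun i => ht i) hsumS]
    exact h
  · rw [tsum_eq_zero_of_not_summable hsum]
    exact mul_nonneg hC hS

namespace Cube

variable {n : ℕ} (Q : Cube n)

lemma set_eq_preimage : Q.set = (MeasurableEquiv.toLp 2 (Fin n → ℝ)).symm ⁻¹'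
    univ.pi fun i => Ico (Q.corner i) (Q.corner i + Q.side) := by
  ext x
  simp [Cube.set, mem_pi, mem_Ico]

lemma measurableSet_set : MeasurableSet Q.set := by
  rw [set_eq_preimage]
  exact (MeasurableEquiv.toLp 2 (Fin n → ℝ)).symm.measurable
    (MeasurableSet.univ_pi fun _ => measurableSet_Ico)

lemma volume_set : volume Q.set = ENNReal.ofReal Q.side ^ n := by
  rw [set_eq_preimage,
    (EuclideanSpace.volume_preserving_symm_measurableEquiv_toLp (Fin n)).measure_preimage
      (MeasurableSet.univ_pi fun _ => measurableSet_Ico).nullMeasurableSet,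
    volume_pi_pi]
  simp [Real.volume_Ico]

lemma corner_mem : Q.corner ∈ Q.set := fun _ => ⟨le_rfl, by linarith [Q.side_pos]⟩

lemma volume_set_ne_top : volume Q.set ≠ ⊤ := by
  simp [volume_set]

lemma volume_set_toReal : (volume Q.set).toReal = Q.side ^ n := by
  rw [volume_set, ENNReal.toReal_pow, ENNReal.toReal_ofReal Q.side_pos.le]

lemma volume_set_toReal_rpow (hn : n ≠ 0) (α : ℝ) :
    (volume Q.set).toReal ^ (α / n) = Q.side ^ α := by
  rw [volume_set_toReal, ← Real.rpow_natCast, ← Real.rpow_mul Q.side_pos.le]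
  field_simp

lemma integral_eq_mul_average (f : EuclideanSpace ℝ (Fin n) → ℝ) :
    ∫ y in Q.set, f y = (volume Q.set).toReal * ⨍ y in Q.set, f y :=
  (measure_smul_setAverage f Q.volume_set_ne_top).symm

variable [NeZero n] {Q P : Cube n}

lemma volume_set_lt_of_side_lt (h : Q.side < P.side) : volume Q.set < volume P.set := by
  rw [volume_set, volume_set]
  exact ENNReal.pow_lt_pow_left (NeZero.ne n)
    ((ENNReal.ofReal_lt_ofReal_iff (Q.side_pos.trans h)).2 h)

lemma side_le_of_subset (h : Q.set ⊆ P.set) : Q.side ≤ P.side :=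
  not_lt.1 fun hlt => (measure_mono h).not_gt (volume_set_lt_of_side_lt hlt)

end Cube

namespace IsDyadicGrid

variable {n : ℕ} {D : Set (Cube n)} (hD : IsDyadicGrid D)
include hD

lemma subset_or_subset_or_disjoint {Q P : Cube n} (hQ : Q ∈ D) (hP : P ∈ D) :
    Q.set ⊆ P.set ∨ P.set ⊆ Q.set ∨ Disjoint Q.set P.set := by
  rcases hD.2.2.1 Q hQ P hP with h | h | h
  · exact Or.inr (Or.inr (disjoint_iff_inter_eq_empty.2 h))
  · exact Or.inr (Or.inl (inter_eq_right.1 h))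
  · exact Or.inl (inter_eq_left.1 h)

lemma subset_or_subset {Q P : Cube n} (hQ : Q ∈ D) (hP : P ∈ D)
    {x : EuclideanSpace ℝ (Fin n)} (hxQ : x ∈ Q.set) (hxP : x ∈ P.set) :
    Q.set ⊆ P.set ∨ P.set ⊆ Q.set :=
  (hD.subset_or_subset_or_disjoint hQ hP).imp_right
    (Or.resolve_right · (not_disjoint_iff.2 ⟨x, hxQ, hxP⟩))

lemma eq_of_side_eq {Q P : Cube n} (hQ : Q ∈ D) (hP : P ∈ D) (hside : Q.side = P.side)
    {x : EuclideanSpace ℝ (Fin n)} (hxQ : x ∈ Q.set) (hxP : x ∈ P.set) : Q = P := by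
  obtain ⟨k, hk⟩ := hD.2.1 Q hQ
  exact (hD.2.2.2 k x).unique ⟨hQ, hk, hxQ⟩ ⟨hP, hside ▸ hk, hxP⟩

def cube (k : ℤ) (x : EuclideanSpace ℝ (Fin n)) : Cube n :=
  (hD.2.2.2 k x).exists.choose

lemma cube_mem (k : ℤ) (x : EuclideanSpace ℝ (Fin n)) : hD.cube k x ∈ D :=
  (hD.2.2.2 k x).exists.choose_spec.1

lemma cube_side (k : ℤ) (x : EuclideanSpace ℝ (Fin n)) : (hD.cube k x).side = 2 ^ k :=
  (hD.2.2.2 k x).exists.choose_spec.2.1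

lemma mem_cube (k : ℤ) (x : EuclideanSpace ℝ (Fin n)) : x ∈ (hD.cube k x).set :=
  (hD.2.2.2 k x).exists.choose_spec.2.2

lemma eq_cube {Q : Cube n} (hQ : Q ∈ D) {k : ℤ} (hside : Q.side = 2 ^ k)
    {x : EuclideanSpace ℝ (Fin n)} (hx : x ∈ Q.set) : Q = hD.cube k x :=
  hD.eq_of_side_eq hQ (hD.cube_mem k x) (hside.trans (hD.cube_side k x).symm) hx
    (hD.mem_cube k x)

variable [NeZero n]

lemma subset_of_side_le {Q P : Cube n} (hQ : Q ∈ D) (hP : P ∈ D)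
    {x : EuclideanSpace ℝ (Fin n)} (hxQ : x ∈ Q.set) (hxP : x ∈ P.set)
    (hside : Q.side ≤ P.side) : Q.set ⊆ P.set := by
  rcases hD.subset_or_subset hQ hP hxQ hxP with h | h
  · exact h
  · rw [hD.eq_of_side_eq hQ hP (hside.antisymm (Cube.side_le_of_subset h)) hxQ hxP]

lemma cube_subset_cube {j k : ℤ} (h : j ≤ k) (x : EuclideanSpace ℝ (Fin n)) :
    (hD.cube j x).set ⊆ (hD.cube k x).set :=
  hD.subset_of_side_le (hD.cube_mem j x) (hD.cube_mem k x) (hD.mem_cube j x) (hD.mem_cube k x)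
    (by rw [cube_side, cube_side]; exact zpow_le_zpow_right₀ one_le_two h)

lemma exists_parent {Q : Cube n} (hQ : Q ∈ D) :
    ∃ P ∈ D, Q.set ⊂ P.set ∧ (volume P.set).toReal = 2 ^ n * (volume Q.set).toReal := by
  obtain ⟨k, hk⟩ := hD.2.1 Q hQ
  have hside : (hD.cube (k + 1) Q.corner).side = 2 * Q.side := by
    rw [cube_side, hk, zpow_add_one₀ two_ne_zero, mul_comm]
  refine ⟨hD.cube (k + 1) Q.corner, hD.cube_mem _ _, ⟨?_, fun h => ?_⟩, ?_⟩
  · exact hD.subset_of_side_le hQ (hD.cube_mem _ _) Q.corner_mem (hD.mem_cube _ _)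
      (by linarith [Q.side_pos])
  · exact (measure_mono h).not_gt (Cube.volume_set_lt_of_side_lt (by linarith [Q.side_pos]))
  · rw [Cube.volume_set_toReal, Cube.volume_set_toReal, hside, mul_pow]

end IsDyadicGrid

section Stopping

variable {n : ℕ} {D : Set (Cube n)} {f : EuclideanSpace ℝ (Fin n) → ℝ} {a : ℝ}

/-- `Q` is a maximal cube of `D` on which the average of `f` exceeds `a ^ m`. -/
def IsStoppingCube (D : Set (Cube n)) (f : EuclideanSpace ℝ (Fin n) → ℝ) (a : ℝ) (m : ℤ)
    (Q : Cube n) : Prop :=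
  Q ∈ D ∧ a ^ m < ⨍ y in Q.set, f y ∧ ∀ R ∈ D, Q.set ⊂ R.set → ⨍ y in R.set, f y ≤ a ^ m

def stoppingCubes (D : Set (Cube n)) (f : EuclideanSpace ℝ (Fin n) → ℝ) (a : ℝ) :
    Set (Cube n) :=
  {Q | ∃ m : ℤ, IsStoppingCube D f a m Q}

lemma stoppingCubes_subset : stoppingCubes D f a ⊆ D := fun _ ⟨_, h⟩ => h.1

lemma IsStoppingCube.lt_of_ssubset (ha : 1 ≤ a) {m m' : ℤ} {Q Q' : Cube n}
    (hQ : IsStoppingCube D f a m Q) (hQ' : IsStoppingCube D f a m' Q') (h : Q'.set ⊂ Q.set) :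
    m < m' := by
  by_contra! hle
  linarith [hQ.2.1, hQ'.2.2 Q hQ.1 h, zpow_le_zpow_right₀ ha hle]

variable [NeZero n]

lemma IsStoppingCube.integral_le (hD : IsDyadicGrid D) (hint : Integrable f)
    (hnn : ∀ x, 0 ≤ f x) {m : ℤ} {Q : Cube n} (hQ : IsStoppingCube D f a m Q) :
    ∫ y in Q.set, f y ≤ 2 ^ n * a ^ m * (volume Q.set).toReal := by
  obtain ⟨P, hP, hQP, hvol⟩ := hD.exists_parent hQ.1
  calc ∫ y in Q.set, f y ≤ ∫ y in P.set, f y :=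
        setIntegral_mono_set hint.integrableOn (ae_of_all _ hnn) hQP.1.eventuallyLE
    _ = (volume P.set).toReal * ⨍ y in P.set, f y := P.integral_eq_mul_average f
    _ ≤ (volume P.set).toReal * a ^ m := by gcongr; exact hQ.2.2 P hP hQP
    _ = 2 ^ n * a ^ m * (volume Q.set).toReal := by rw [hvol]; ring

lemma stoppingCubes_sparse (hD : IsDyadicGrid D) (hint : Integrable f) (hnn : ∀ x, 0 ≤ f x)
    (ha : 2 ^ (n + 1) ≤ a) : IsSparse (stoppingCubes D f a) := by
  rintro Q ⟨m, hQ⟩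
  have ha1 : 1 ≤ a := (one_le_pow₀ one_le_two).trans ha
  set b : ℝ := 2 ^ n * a ^ m
  have hb : 0 < b := by positivity
  set 𝒞 := Cube.set '' {Q' ∈ stoppingCubes D f a | Q'.set ⊂ Q.set}
  -- a stopping cube inside `Q` has a larger height, so its average exceeds `a ^ (m + 1) ≥ 2 b`
  have hlarge : ∀ s ∈ 𝒞, ENNReal.ofReal (2 * b) * volume s ≤
      ∫⁻ y in s, ENNReal.ofReal (f y) := by
    rintro _ ⟨Q', ⟨⟨m', hQ'⟩, hQ'Q⟩, rfl⟩
    refine ofReal_mul_measure_le_setLIntegral hint hnn Q'.volume_set_ne_top (by positivity)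
      (le_of_lt ?_)
    calc 2 * b ≤ a ^ (m + 1) := by
          rw [zpow_add_one₀ (by positivity), mul_comm _ a, ← mul_assoc, ← pow_succ']
          gcongr
      _ ≤ a ^ m' := zpow_le_zpow_right₀ ha1 (hQ.lt_of_ssubset ha1 hQ' hQ'Q)
      _ < ⨍ y in Q'.set, f y := hQ'.2.1
  have hcover : ENNReal.ofReal (2 * b) * volume (⋃₀ 𝒞) ≤ ENNReal.ofReal b * volume Q.set := by
    calc ENNReal.ofReal (2 * b) * volume (⋃₀ 𝒞) ≤ ∫⁻ y in ⋃₀ 𝒞, ENNReal.ofReal (f y) := by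
          refine mul_measure_sUnion_le_lintegral
            ((hD.1.mono fun _ h => stoppingCubes_subset h.1).image _) ?_ ?_ hlarge
          · rintro _ ⟨Q', -, rfl⟩
            exact Q'.measurableSet_set
          · rintro _ ⟨Q₁, h₁, rfl⟩ _ ⟨Q₂, h₂, rfl⟩
            exact hD.subset_or_subset_or_disjoint (stoppingCubes_subset h₁.1)
              (stoppingCubes_subset h₂.1)
      _ ≤ ∫⁻ y in Q.set, ENNReal.ofReal (f y) :=
          lintegral_mono_set (sUnion_subset fun _ ⟨_, h, hs⟩ => hs ▸ h.2.1)
      _ = ENNReal.ofReal (∫ y in Q.set, f y) :=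
          (ofReal_integral_eq_lintegral_ofReal hint.integrableOn (ae_of_all _ hnn)).symm
      _ ≤ ENNReal.ofReal (b * (volume Q.set).toReal) :=
          ENNReal.ofReal_le_ofReal (hQ.integral_le hD hint hnn)
      _ = ENNReal.ofReal b * volume Q.set := by
          rw [ENNReal.ofReal_mul hb.le, ENNReal.ofReal_toReal Q.volume_set_ne_top]
  have hU : properSubUnion (stoppingCubes D f a) Q = ⋃₀ 𝒞 := by
    rw [properSubUnion, sUnion_image]
  rw [hU, ENNReal.le_div_iff_mul_le (by norm_num) (by norm_num), mul_comm]
  rw [ENNReal.ofReal_mul zero_le_two, ENNReal.ofReal_ofNat, mul_comm 2, mul_assoc] at hcover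
  exact (ENNReal.mul_le_mul_iff_right (ENNReal.ofReal_pos.2 hb).ne' ENNReal.ofReal_ne_top).1
    hcover

end Stopping

section Domination

variable {n : ℕ} {D : Set (Cube n)} {f : EuclideanSpace ℝ (Fin n) → ℝ} {a : ℝ}

def rieszTerm (α : ℝ) (f : EuclideanSpace ℝ (Fin n) → ℝ) (x : EuclideanSpace ℝ (Fin n))
    (Q : Cube n) : ℝ :=
  indicator Q.set (fun _ => (volume Q.set).toReal ^ (α / n) * ⨍ y in Q.set, f y) x

lemma dyadicRiesz_eq_tsum_rieszTerm (S : Set (Cube n)) (α : ℝ) (x : EuclideanSpace ℝ (Fin n)) :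
    dyadicRiesz S α f x = ∑' Q : S, rieszTerm α f x Q := rfl

lemma rieszTerm_nonneg (hnn : ∀ x, 0 ≤ f x) (α : ℝ) (x : EuclideanSpace ℝ (Fin n))
    (Q : Cube n) : 0 ≤ rieszTerm α f x Q :=
  indicator_nonneg (fun _ _ => mul_nonneg (Real.rpow_nonneg ENNReal.toReal_nonneg _)
    (setAverage_nonneg_of_nonneg hnn _)) x

variable [NeZero n]

lemma rieszTerm_of_mem {α : ℝ} {x : EuclideanSpace ℝ (Fin n)} {Q : Cube n} (hx : x ∈ Q.set) :
    rieszTerm α f x Q = Q.side ^ α * ⨍ y in Q.set, f y := by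
  rw [rieszTerm, indicator_of_mem hx, Q.volume_set_toReal_rpow (NeZero.ne n)]

lemma mem_and_average_pos_of_rieszTerm_ne_zero (hnn : ∀ x, 0 ≤ f x) {α : ℝ}
    {x : EuclideanSpace ℝ (Fin n)} {Q : Cube n} (h : rieszTerm α f x Q ≠ 0) :
    x ∈ Q.set ∧ 0 < ⨍ y in Q.set, f y := by
  have hx : x ∈ Q.set := by_contra fun hx => h (indicator_of_notMem hx _)
  refine ⟨hx, (setAverage_nonneg_of_nonneg hnn _).lt_of_ne fun h0 => h ?_⟩
  rw [rieszTerm_of_mem hx, ← h0, mul_zero]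

lemma IsDyadicGrid.exists_bound_of_lt_average (hD : IsDyadicGrid D) (hint : Integrable f)
    (hnn : ∀ x, 0 ≤ f x) {t : ℝ} (ht : 0 < t) (x : EuclideanSpace ℝ (Fin n)) :
    ∃ b : ℤ, ∀ k, t < ⨍ y in (hD.cube k x).set, f y → k ≤ b := by
  obtain ⟨N, hN⟩ := pow_unbounded_of_one_lt ((∫ y, f y) / t) one_lt_two
  refine ⟨N, fun k hk => not_lt.1 fun hNk => hk.not_ge ?_⟩
  have hvol : (2 : ℝ) ^ N ≤ (volume (hD.cube k x).set).toReal := by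
    rw [Cube.volume_set_toReal, cube_side, ← zpow_natCast]
    exact (zpow_le_zpow_right₀ one_le_two hNk.le).trans
      (le_self_pow₀ (one_le_zpow₀ one_le_two (by omega)) (NeZero.ne n))
  calc ⨍ y in (hD.cube k x).set, f y ≤ (∫ y, f y) / (volume (hD.cube k x).set).toReal :=
        setAverage_le_integral_div hint hnn _
    _ ≤ (∫ y, f y) / 2 ^ N := div_le_div_of_nonneg_left (integral_nonneg hnn) (by positivity) hvol
    _ ≤ t := by rw [div_lt_iff₀ ht] at hN; rw [div_le_iff₀ (by positivity)]; linarith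

lemma exists_stoppingCube_superset (hD : IsDyadicGrid D) (hint : Integrable f)
    (hnn : ∀ x, 0 ≤ f x) (ha : 1 < a) {Q : Cube n} (hQ : Q ∈ D)
    (havg : 0 < ⨍ y in Q.set, f y) :
    ∃ P ∈ stoppingCubes D f a, Q.set ⊆ P.set ∧ ⨍ y in Q.set, f y ≤ a * ⨍ y in P.set, f y := by
  classical
  set x := Q.corner
  obtain ⟨j, hj⟩ := hD.2.1 Q hQ
  have hQj : Q = hD.cube j x := hD.eq_cube hQ hj Q.corner_mem
  obtain ⟨m, hm⟩ := exists_mem_Ioc_zpow havg ha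
  -- the largest cube around `x` whose average exceeds `a ^ m` is a stopping cube
  obtain ⟨J, hJ, hJmax⟩ := Int.exists_greatest_of_bdd
    (hD.exists_bound_of_lt_average hint hnn (zpow_pos (one_pos.trans ha) m) x)
    ⟨j, hQj ▸ hm.1⟩
  refine ⟨hD.cube J x, ⟨m, hD.cube_mem J x, hJ, fun R hR hJR => ?_⟩,
    hQj ▸ hD.cube_subset_cube (hJmax j (hQj ▸ hm.1)) x, ?_⟩
  · obtain ⟨k, hk⟩ := hD.2.1 R hR
    have hRk : R = hD.cube k x := hD.eq_cube hR hk (hJR.1 (hD.mem_cube J x))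
    refine not_lt.1 fun hlt => hJR.2 ?_
    rw [hRk]
    exact hD.cube_subset_cube (hJmax k (hRk ▸ hlt)) x
  · calc ⨍ y in Q.set, f y ≤ a ^ (m + 1) := hm.2
      _ = a * a ^ m := by rw [zpow_add_one₀ (one_pos.trans ha).ne', mul_comm]
      _ ≤ a * ⨍ y in (hD.cube J x).set, f y := by gcongr

lemma tsum_ofReal_rieszTerm_le (hD : IsDyadicGrid D) (hint : Integrable f)
    (hnn : ∀ x, 0 ≤ f x) (ha : 1 < a) {α : ℝ} (hα : 0 < α) (x : EuclideanSpace ℝ (Fin n)) :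
    ∑' Q : D, ENNReal.ofReal (rieszTerm α f x Q) ≤
      ENNReal.ofReal (a / (1 - ((2 : ℝ) ^ α)⁻¹)) *
        ∑' P : stoppingCubes D f a, ENNReal.ofReal (rieszTerm α f x P) := by
  classical
  set r : ℝ := 2 ^ α
  have hr : 1 < r := Real.one_lt_rpow one_lt_two hα
  set S := stoppingCubes D f a
  -- the cube of `D` of side `2 ^ j` around `x` is charged to `(P, j)`, `P` a stopping cube above it
  set w : S × ℤ → ℝ≥0∞ := fun p =>
    if x ∈ (p.1 : Cube n).set ∧ (2 : ℝ) ^ p.2 ≤ (p.1 : Cube n).side then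
      ENNReal.ofReal (r ^ p.2) * ENNReal.ofReal (a * ⨍ y in (p.1 : Cube n).set, f y)
    else 0
  have hcharge : ∀ Q : D, ENNReal.ofReal (rieszTerm α f x Q) ≠ 0 →
      ∃ p : S × ℤ, (⟨hD.cube p.2 x, hD.cube_mem _ _⟩ : D) = Q ∧
        ENNReal.ofReal (rieszTerm α f x Q) ≤ w p := by
    rintro ⟨Q, hQ⟩ hne
    obtain ⟨hx, havg⟩ := mem_and_average_pos_of_rieszTerm_ne_zero hnn
      fun h => hne (by rw [h, ENNReal.ofReal_zero])
    obtain ⟨P, hP, hQP, havgP⟩ := exists_stoppingCube_superset hD hint hnn ha hQ havg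
    obtain ⟨j, hj⟩ := hD.2.1 Q hQ
    refine ⟨(⟨P, hP⟩, j), Subtype.ext (hD.eq_cube hQ hj hx).symm, ?_⟩
    dsimp only [w]
    rw [if_pos ⟨hQP hx, hj ▸ Cube.side_le_of_subset hQP⟩, ← ENNReal.ofReal_mul (by positivity),
      rieszTerm_of_mem hx, hj, ← Real.rpow_zpow_comm zero_le_two]
    exact ENNReal.ofReal_le_ofReal (by gcongr)
  have hsum : ∀ P : S, ∑' j : ℤ, w (P, j) =
      ENNReal.ofReal (a / (1 - r⁻¹)) * ENNReal.ofReal (rieszTerm α f x P) := by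
    intro P
    by_cases hxP : x ∈ (P : Cube n).set
    · obtain ⟨L, hL⟩ := hD.2.1 P (stoppingCubes_subset P.2)
      have hw : ∀ j, w (P, j) = (if j ≤ L then ENNReal.ofReal (r ^ j) else 0) *
          ENNReal.ofReal (a * ⨍ y in (P : Cube n).set, f y) := by
        intro j
        simp only [w, hxP, true_and, hL, zpow_le_zpow_iff_right₀ (one_lt_two (α := ℝ))]
        split_ifs <;> simp
      have hq : 0 < 1 - r⁻¹ := sub_pos.2 (inv_lt_one_of_one_lt₀ hr)
      rw [tsum_congr hw, ENNReal.tsum_mul_right, ENNReal.tsum_ite_le_ofReal_zpow hr,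
        rieszTerm_of_mem hxP, hL, ← Real.rpow_zpow_comm zero_le_two,
        ← ENNReal.ofReal_mul (by positivity), ← ENNReal.ofReal_mul (by positivity)]
      congr 1
      ring
    · simp [w, hxP, rieszTerm]
  calc ∑' Q : D, ENNReal.ofReal (rieszTerm α f x Q) ≤ ∑' p : S × ℤ, w p :=
        ENNReal.tsum_le_tsum_of_exists_preimage _ hcharge
    _ = ∑' P : S, ∑' j : ℤ, w (P, j) := ENNReal.tsum_prod (f := fun P j => w (P, j))
    _ = ENNReal.ofReal (a / (1 - r⁻¹)) * ∑' P : S, ENNReal.ofReal (rieszTerm α f x P) := by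
        rw [tsum_congr hsum, ENNReal.tsum_mul_left]

end Domination

/-- For a bounded nonnegative function with compact support there is a sparse subfamily
`𝒮 ⊆ 𝒟` with `I_α^𝒟 f ≤ C(n,α) I_α^𝒮 f` pointwise, for all `0 < α < n`. -/
theorem statement4 (n : ℕ) (D : Set (Cube n)) (hD : IsDyadicGrid D)
    (f : EuclideanSpace ℝ (Fin n) → ℝ) (hf : Measurable f) (hnn : ∀ x, 0 ≤ f x)
    (hbd : ∃ M : ℝ, ∀ x, f x ≤ M) (hsupp : HasCompactSupport f) :
    ∃ S : Set (Cube n), S ⊆ D ∧ IsSparse S ∧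
      ∀ α : ℝ, 0 < α → α < n → ∃ C : ℝ, 0 < C ∧
        ∀ x, dyadicRiesz D α f x ≤ C * dyadicRiesz S α f x := by
  rcases eq_or_ne n 0 with rfl | hn
  · exact ⟨∅, empty_subset D, fun _ h => h.elim, fun α hα hα0 => by norm_num at hα0; linarith⟩
  have : NeZero n := ⟨hn⟩
  obtain ⟨M, hM⟩ := hbd
  have hint : Integrable f := integrable_of_bounded_of_hasCompactSupport hf hnn hM hsupp
  have ha : (1 : ℝ) < 2 ^ (n + 1) := one_lt_pow₀ one_lt_two n.succ_ne_zero
  refine ⟨stoppingCubes D f (2 ^ (n + 1)), stoppingCubes_subset,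
    stoppingCubes_sparse hD hint hnn le_rfl, fun α hα _ => ?_⟩
  have hq : 0 < 1 - ((2 : ℝ) ^ α)⁻¹ :=
    sub_pos.2 (inv_lt_one_of_one_lt₀ (Real.one_lt_rpow one_lt_two hα))
  refine ⟨2 ^ (n + 1) / (1 - ((2 : ℝ) ^ α)⁻¹), by positivity, fun x => ?_⟩
  rw [dyadicRiesz_eq_tsum_rieszTerm, dyadicRiesz_eq_tsum_rieszTerm]
  exact tsum_le_mul_tsum_of_ofReal_le stoppingCubes_subset (rieszTerm_nonneg hnn α x)
    (by positivity) (tsum_ofReal_rieszTerm_le hD hint hnn ha hα x)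
end
end
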